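/- arXiv:1802.08146 — 3 statements merged into one kernel-verified Lean document; each statement's English description precedes it below -/
import Mathlib

section
/- Let Ω ⊆ ℝⁿ be open, Y : Ω → ℝⁿ a C¹ vector field, and Q : Ω → ℝ continuous, satisfying the pointwise inequality |Y(x)|² + Q(x) ≤ −div Y(x) for all x ∈ Ω. Then for every compactly supported C¹ function f : Ω → ℝ, one has ∫_Ω (|∇f|² − Q f²) ≥ 0. -/
open MeasureTheory RealInnerProductSpace

/-- The Euclidean divergence of a vector field. -/
noncomputable def ediv {n : ℕ}
    (Y : EuclideanSpace ℝ (Fin n) → EuclideanSpace ℝ (Fin n))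
    (x : EuclideanSpace ℝ (Fin n)) : ℝ :=
  ∑ i, fderiv ℝ Y x (EuclideanSpace.single i 1) i

lemma aux1 {n : ℕ} (g : EuclideanSpace ℝ (Fin n) → ℝ) (hg : ContDiff ℝ 1 g)
    (hgc : HasCompactSupport g) (v : EuclideanSpace ℝ (Fin n)) :
    ∫ x, fderiv ℝ g x v = 0 := by
  have hcont : Continuous fun x => fderiv ℝ g x v :=
    (hg.continuous_fderiv one_ne_zero).clm_apply continuous_const
  have hcs : HasCompactSupport fun x => fderiv ℝ g x v :=
    (hgc.fderiv ℝ).comp_left (g := fun L : _ →L[ℝ] ℝ => L v) rfl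
  have h := integral_mul_fderiv_eq_neg_fderiv_mul_of_integrable
    (μ := volume) (f := fun _ => (1:ℝ)) (g := g) (v := v)
    (by simp [fderiv_fun_const]) (by simpa using hcont.integrable_of_hasCompactSupport hcs)
    (by simpa using hg.continuous.integrable_of_hasCompactSupport hgc)
    (fun x _ => differentiableAt_const (1:ℝ)) (fun x _ => hg.differentiable one_ne_zero x)
  simpa [fderiv_fun_const] using h

lemma aux2 {n : ℕ} (Z : EuclideanSpace ℝ (Fin n) → EuclideanSpace ℝ (Fin n))
    (hZ : ContDiff ℝ 1 Z) (hZc : HasCompactSupport Z) :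
    ∫ x, ediv Z x = 0 := by
  have hdiff := hZ.differentiable one_ne_zero
  have hterm : ∀ i : Fin n, ∫ x, fderiv ℝ Z x (EuclideanSpace.single i 1) i = 0 := by
    intro i
    have hZi : ContDiff ℝ 1 (fun x => Z x i) :=
      (EuclideanSpace.proj (𝕜 := ℝ) i).contDiff.comp hZ
    have hZic : HasCompactSupport (fun x => Z x i) :=
      hZc.comp_left (g := fun v : EuclideanSpace ℝ (Fin n) => v i) rfl
    have key := aux1 (fun x => Z x i) hZi hZic (EuclideanSpace.single i 1)
    have heq : ∀ x, fderiv ℝ (fun x => Z x i) x (EuclideanSpace.single i 1)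
        = fderiv ℝ Z x (EuclideanSpace.single i 1) i := by
      intro x
      have h1 : HasFDerivAt (fun x => Z x i)
          ((EuclideanSpace.proj (𝕜 := ℝ) i).comp (fderiv ℝ Z x)) x :=
        (EuclideanSpace.proj (𝕜 := ℝ) i).hasFDerivAt.comp x (hdiff x).hasFDerivAt
      rw [h1.fderiv]; rfl
    rw [← key]; exact integral_congr_ae (Filter.Eventually.of_forall fun x => (heq x).symm)
  have hint : ∀ i : Fin n, Integrable (fun x => fderiv ℝ Z x (EuclideanSpace.single i 1) i) := by
    intro i
    have hcont : Continuous fun x => fderiv ℝ Z x (EuclideanSpace.single i 1) i := by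
      have : Continuous fun x => fderiv ℝ Z x (EuclideanSpace.single i 1) :=
        (hZ.continuous_fderiv one_ne_zero).clm_apply continuous_const
      exact (EuclideanSpace.proj (𝕜 := ℝ) i).continuous.comp this
    have hcs : HasCompactSupport fun x => fderiv ℝ Z x (EuclideanSpace.single i 1) i :=
      (hZc.fderiv ℝ).comp_left
        (g := fun L : _ →L[ℝ] EuclideanSpace ℝ (Fin n) => L (EuclideanSpace.single i 1) i) rfl
    exact hcont.integrable_of_hasCompactSupport hcs
  unfold ediv
  rw [integral_finset_sum _ (fun i _ => hint i)]
  simp [hterm]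

theorem stmt_8 {n : ℕ} (Ω : Set (EuclideanSpace ℝ (Fin n))) (hΩ : IsOpen Ω)
    (Y : EuclideanSpace ℝ (Fin n) → EuclideanSpace ℝ (Fin n))
    (hY : ContDiffOn ℝ 1 Y Ω) (Q : EuclideanSpace ℝ (Fin n) → ℝ)
    (hQ : ContinuousOn Q Ω)
    (hineq : ∀ x ∈ Ω, ‖Y x‖ ^ 2 + Q x ≤ - ediv Y x)
    (f : EuclideanSpace ℝ (Fin n) → ℝ) (hf : ContDiff ℝ 1 f)
    (hfc : HasCompactSupport f) (hsupp : tsupport f ⊆ Ω) :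
    0 ≤ ∫ x in Ω, (‖gradient f x‖ ^ 2 - Q x * (f x) ^ 2) := by
  classical
  set K := tsupport f with hK
  have hKc : IsCompact K := hfc
  have hKcl : IsClosed K := isClosed_tsupport f
  have f0 : ∀ x ∉ K, f x = 0 := fun x hx => image_eq_zero_of_notMem_tsupport hx
  -- extension of Y and the vector field Z = f² • Y
  set Y' : EuclideanSpace ℝ (Fin n) → EuclideanSpace ℝ (Fin n) :=
    fun x => if x ∈ Ω then Y x else 0 with hY'
  set Z : EuclideanSpace ℝ (Fin n) → EuclideanSpace ℝ (Fin n) :=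
    fun x => (f x * f x) • Y' x with hZdef
  have hZK : ∀ x ∉ K, Z x = 0 := by
    intro x hx; simp [hZdef, f0 x hx]
  -- f eventually zero near points outside K
  have fev0 : ∀ x ∉ K, f =ᶠ[nhds x] 0 := by
    intro x hx
    filter_upwards [hKcl.isOpen_compl.mem_nhds hx] with y hy using f0 y hy
  have fd0 : ∀ x ∉ K, fderiv ℝ f x = 0 := by
    intro x hx
    rw [(fev0 x hx).fderiv_eq]; exact fderiv_const_apply 0
  have grad0 : ∀ x ∉ K, gradient f x = 0 := by
    intro x hx
    simp only [gradient, fd0 x hx, map_zero]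
  -- Z is C¹ with compact support
  have hZ : ContDiff ℝ 1 Z := by
    rw [contDiff_iff_contDiffAt]
    intro x
    by_cases hx : x ∈ Ω
    · have hYx : ContDiffAt ℝ 1 Y x := hY.contDiffAt (hΩ.mem_nhds hx)
      have hnice : ContDiffAt ℝ 1 (fun y => (f y * f y) • Y y) x :=
        ((hf.contDiffAt.mul hf.contDiffAt)).smul hYx
      refine hnice.congr_of_eventuallyEq ?_
      filter_upwards [hΩ.mem_nhds hx] with y hy
      simp [hZdef, hY', hy]
    · have hxK : x ∉ K := fun h => hx (hsupp h)
      refine contDiffAt_const (c := 0) |>.congr_of_eventuallyEq ?_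
      filter_upwards [hKcl.isOpen_compl.mem_nhds hxK] with y hy
      simp [hZK y hy]
  have hZc : HasCompactSupport Z :=
    HasCompactSupport.intro hKc hZK
  -- divergence of Z vanishes outside K
  have hdivZ0 : ∀ x ∉ K, ediv Z x = 0 := by
    intro x hx
    have hz : Z =ᶠ[nhds x] (fun _ => 0) := by
      filter_upwards [hKcl.isOpen_compl.mem_nhds hx] with y hy using hZK y hy
    unfold ediv
    rw [hz.fderiv_eq]
    simp [fderiv_const_apply]
  -- key pointwise identity on Ω
  have hdivZ : ∀ x ∈ Ω, ediv Z x =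
      (f x * f x) * ediv Y x + 2 * f x * fderiv ℝ f x (Y x) := by
    intro x hx
    have hYd : DifferentiableAt ℝ Y x :=
      (hY.contDiffAt (hΩ.mem_nhds hx)).differentiableAt one_ne_zero
    have hfd : DifferentiableAt ℝ f x := hf.differentiable one_ne_zero x
    set c' : EuclideanSpace ℝ (Fin n) →L[ℝ] ℝ :=
      f x • fderiv ℝ f x + f x • fderiv ℝ f x with hc'
    have hc : HasFDerivAt (fun y => f y * f y) c' x :=
      hfd.hasFDerivAt.mul hfd.hasFDerivAt
    have hsm : HasFDerivAt (fun y => (f y * f y) • Y y)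
        ((f x * f x) • fderiv ℝ Y x + c'.smulRight (Y x)) x :=
      hc.smul hYd.hasFDerivAt
    have hev : Z =ᶠ[nhds x] (fun y => (f y * f y) • Y y) := by
      filter_upwards [hΩ.mem_nhds hx] with y hy
      simp [hZdef, hY', hy]
    have hfder : fderiv ℝ Z x = (f x * f x) • fderiv ℝ Y x + c'.smulRight (Y x) := by
      rw [hev.fderiv_eq, hsm.fderiv]
    unfold ediv
    rw [hfder]
    have hsum : ∀ i : Fin n,
        ((f x * f x) • fderiv ℝ Y x + c'.smulRight (Y x)) (EuclideanSpace.single i 1) i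
        = (f x * f x) * fderiv ℝ Y x (EuclideanSpace.single i 1) i
          + c' (EuclideanSpace.single i 1) * Y x i := by
      intro i
      simp [ContinuousLinearMap.smulRight_apply, ContinuousLinearMap.add_apply,
        ContinuousLinearMap.smul_apply]
    rw [Finset.sum_congr rfl (fun i _ => hsum i), Finset.sum_add_distrib, ← Finset.mul_sum]
    congr 1
    -- ∑ i, c' (single i 1) * Y x i = 2 * f x * fderiv f x (Y x)
    have hbasis : ∑ i, (Y x i) • (EuclideanSpace.single i (1:ℝ)) = Y x := by
      have := (EuclideanSpace.basisFun (Fin n) ℝ).sum_repr (Y x)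
      simpa [EuclideanSpace.basisFun_apply, EuclideanSpace.basisFun_repr] using this
    have : c' (Y x) = ∑ i, c' (EuclideanSpace.single i 1) * Y x i := by
      conv_lhs => rw [← hbasis]
      rw [map_sum]
      exact Finset.sum_congr rfl fun i _ => by
        rw [ContinuousLinearMap.map_smul]; simp [mul_comm]
    rw [← this]
    simp [hc', ContinuousLinearMap.add_apply, ContinuousLinearMap.smul_apply]
    ring
  -- the gradient-inner product identity
  have hgrad_inner : ∀ x, ⟪gradient f x, Y x⟫ = fderiv ℝ f x (Y x) := by
    intro x
    simp only [gradient]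
    exact InnerProductSpace.toDual_symm_apply
  -- pointwise inequality : ediv Z ≤ integrand
  have hpt : ∀ x, ediv Z x ≤ ‖gradient f x‖ ^ 2 - Q x * (f x) ^ 2 := by
    intro x
    by_cases hx : x ∈ Ω
    · rw [hdivZ x hx]
      have hq := hineq x hx
      have hCS : |fderiv ℝ f x (Y x)| ≤ ‖gradient f x‖ * ‖Y x‖ := by
        rw [← hgrad_inner x]; exact abs_real_inner_le_norm _ _
      have h1 : f x * fderiv ℝ f x (Y x) ≤ |f x| * (‖gradient f x‖ * ‖Y x‖) := by
        calc f x * fderiv ℝ f x (Y x) ≤ |f x * fderiv ℝ f x (Y x)| := le_abs_self _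
        _ = |f x| * |fderiv ℝ f x (Y x)| := abs_mul _ _
        _ ≤ |f x| * (‖gradient f x‖ * ‖Y x‖) :=
            mul_le_mul_of_nonneg_left hCS (abs_nonneg _)
      nlinarith [sq_nonneg (‖gradient f x‖ - |f x| * ‖Y x‖), sq_abs (f x), sq_nonneg (f x)]
    · have hxK : x ∉ K := fun h => hx (hsupp h)
      rw [hdivZ0 x hxK, grad0 x hxK, f0 x hxK]
      simp
  -- integrability
  have hgradcont : Continuous fun x => gradient f x := by
    simp only [gradient]
    exact (LinearIsometryEquiv.continuous _).comp (hf.continuous_fderiv one_ne_zero)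
  have hint1 : Integrable (fun x => ‖gradient f x‖ ^ 2) := by
    refine Continuous.integrable_of_hasCompactSupport (by fun_prop) ?_
    refine HasCompactSupport.intro hKc fun x hx => ?_
    simp [grad0 x hx]
  have hint2 : Integrable (fun x => Q x * (f x) ^ 2) := by
    have hIK : IntegrableOn (fun x => Q x * (f x) ^ 2) K := by
      refine ContinuousOn.integrableOn_compact hKc ?_
      exact (hQ.mono hsupp).mul ((hf.continuous.pow 2).continuousOn)
    refine (integrableOn_iff_integrable_of_support_subset ?_).mp hIK
    intro x hx
    simp only [Function.mem_support] at hx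
    by_contra hxK
    exact hx (by simp [f0 x hxK])
  have hinth : Integrable (fun x => ‖gradient f x‖ ^ 2 - Q x * (f x) ^ 2) := hint1.sub hint2
  have hintZ : Integrable (fun x => ediv Z x) := by
    have hcont : Continuous fun x => ediv Z x := by
      unfold ediv
      refine continuous_finset_sum _ fun i _ => ?_
      have : Continuous fun x => fderiv ℝ Z x (EuclideanSpace.single i 1) :=
        (hZ.continuous_fderiv one_ne_zero).clm_apply continuous_const
      exact (EuclideanSpace.proj (𝕜 := ℝ) i).continuous.comp this
    exact hcont.integrable_of_hasCompactSupport (HasCompactSupport.intro hKc hdivZ0)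
  -- put it together
  have hset : ∫ x in Ω, (‖gradient f x‖ ^ 2 - Q x * (f x) ^ 2)
      = ∫ x, (‖gradient f x‖ ^ 2 - Q x * (f x) ^ 2) := by
    refine setIntegral_eq_integral_of_forall_compl_eq_zero fun x hx => ?_
    have hxK : x ∉ K := fun h => hx (hsupp h)
    rw [grad0 x hxK, f0 x hxK]
    simp
  rw [hset]
  have h0 : (0:ℝ) = ∫ x, ediv Z x := (aux2 Z hZ hZc).symm
  rw [h0]
  exact integral_mono hintZ hinth hpt
end

section
/- Let Ω ⊆ ℝⁿ be open, X : Ω → ℝⁿ a C¹ vector field, q : Ω → ℝ continuous, and u : Ω → ℝ a C² function with u > 0 satisfying Δu + ⟨X, ∇u⟩ + q·u ≤ 0 on Ω. Set φ = log u, Y = ∇φ + X/2, and Q = q − |X|²/4 − (1/2)div X. Then |Y|² + Q ≤ −div Y holds pointwise on Ω. -/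
open MeasureTheory RealInnerProductSpace

/-- The Euclidean Laplacian: divergence of the gradient. -/
noncomputable def elap {n : ℕ} (u : EuclideanSpace ℝ (Fin n) → ℝ)
    (x : EuclideanSpace ℝ (Fin n)) : ℝ :=
  ediv (fun y => gradient u y) x

theorem stmt_9 {n : ℕ} (Ω : Set (EuclideanSpace ℝ (Fin n))) (hΩ : IsOpen Ω)
    (X : EuclideanSpace ℝ (Fin n) → EuclideanSpace ℝ (Fin n))
    (hX : ContDiffOn ℝ 1 X Ω) (q : EuclideanSpace ℝ (Fin n) → ℝ)
    (hq : ContinuousOn q Ω) (u : EuclideanSpace ℝ (Fin n) → ℝ)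
    (hu : ContDiffOn ℝ 2 u Ω) (hupos : ∀ x ∈ Ω, 0 < u x)
    (hsuper : ∀ x ∈ Ω, elap u x + ⟪X x, gradient u x⟫ + q x * u x ≤ 0)
    (φ : EuclideanSpace ℝ (Fin n) → ℝ) (hφ : ∀ x, φ x = Real.log (u x))
    (Y : EuclideanSpace ℝ (Fin n) → EuclideanSpace ℝ (Fin n))
    (hYdef : ∀ x, Y x = gradient φ x + (1 / 2 : ℝ) • X x)
    (Q : EuclideanSpace ℝ (Fin n) → ℝ)
    (hQdef : ∀ x, Q x = q x - ‖X x‖ ^ 2 / 4 - (1 / 2) * ediv X x) :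
    ∀ x ∈ Ω, ‖Y x‖ ^ 2 + Q x ≤ - ediv Y x := by
  intro x hx
  have hxn : Ω ∈ nhds x := hΩ.mem_nhds hx
  have hux : 0 < u x := hupos x hx
  have hudiff : ∀ y ∈ Ω, DifferentiableAt ℝ u y := fun y hy =>
    (hu.contDiffAt (hΩ.mem_nhds hy)).differentiableAt (by norm_num)
  -- gradient of φ on Ω
  have hgradφ : ∀ y ∈ Ω, gradient φ y = (u y)⁻¹ • gradient u y := by
    intro y hy
    have h1 : HasFDerivAt u (fderiv ℝ u y) y := (hudiff y hy).hasFDerivAt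
    have h2 : HasDerivAt Real.log (u y)⁻¹ (u y) := Real.hasDerivAt_log (hupos y hy).ne'
    have h3 : HasFDerivAt φ ((u y)⁻¹ • fderiv ℝ u y) y := by
      have h4 := h2.comp_hasFDerivAt y h1
      have : φ = Real.log ∘ u := funext fun z => hφ z
      rw [this]; exact h4
    show (InnerProductSpace.toDual ℝ (EuclideanSpace ℝ (Fin n))).symm (fderiv ℝ φ y) = _
    rw [h3.fderiv, _root_.map_smul]
    rfl
  -- differentiability of gradient u at x
  have hgu : gradient u = fun y => (InnerProductSpace.toDual ℝ (EuclideanSpace ℝ (Fin n))).symm (fderiv ℝ u y) := rfl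
  have hfd1 : ContDiffAt ℝ 1 (fderiv ℝ u) x :=
    (hu.contDiffAt hxn).fderiv_right (le_refl 2)
  have hgud : DifferentiableAt ℝ (gradient u) x := by
    rw [hgu]
    exact ((InnerProductSpace.toDual ℝ (EuclideanSpace ℝ (Fin n))).symm.toContinuousLinearEquiv.differentiable.differentiableAt).comp x
      (hfd1.differentiableAt one_ne_zero)
  set g' := fderiv ℝ (gradient u) x with hg'def
  have hg' : HasFDerivAt (gradient u) g' x := hgud.hasFDerivAt
  -- inverse
  set c' : EuclideanSpace ℝ (Fin n) →L[ℝ] ℝ := -((u x) ^ 2)⁻¹ • fderiv ℝ u x with hc'def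
  have hc : HasFDerivAt (fun y => (u y)⁻¹) c' x := by
    have := (hasDerivAt_inv hux.ne').comp_hasFDerivAt x (hudiff x hx).hasFDerivAt
    exact this
  set G : EuclideanSpace ℝ (Fin n) → EuclideanSpace ℝ (Fin n) :=
    fun y => (u y)⁻¹ • gradient u y with hGdef
  have hG : HasFDerivAt G ((u x)⁻¹ • g' + c'.smulRight (gradient u x)) x := hc.smul hg'
  have hXd : DifferentiableAt ℝ X x := (hX.contDiffAt hxn).differentiableAt one_ne_zero
  set X' := fderiv ℝ X x with hX'def
  have hsum : HasFDerivAt (fun y => G y + (1/2 : ℝ) • X y)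
      (((u x)⁻¹ • g' + c'.smulRight (gradient u x)) + (1/2 : ℝ) • X') x :=
    hG.add (hXd.hasFDerivAt.const_smul (1/2 : ℝ))
  have hYeq : Y =ᶠ[nhds x] fun y => G y + (1/2 : ℝ) • X y := by
    filter_upwards [hxn] with y hy
    rw [hYdef y, hgradφ y hy]
  have hfY : fderiv ℝ Y x = ((u x)⁻¹ • g' + c'.smulRight (gradient u x)) + (1/2 : ℝ) • X' := by
    rw [hYeq.fderiv_eq, hsum.fderiv]
  set a := gradient u x with hadef
  have ha_i : ∀ i, fderiv ℝ u x (EuclideanSpace.single i 1) = a i := by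
    intro i
    have h : ⟪a, EuclideanSpace.single i 1⟫ = fderiv ℝ u x (EuclideanSpace.single i 1) :=
      InnerProductSpace.toDual_symm_apply
    rw [← h]
    simp [EuclideanSpace.inner_single_right]
  have hnorma : ‖a‖ ^ 2 = ∑ i, a i * a i := by
    rw [EuclideanSpace.norm_sq_eq]; exact Finset.sum_congr rfl fun i _ => by rw [Real.norm_eq_abs, sq_abs, sq]
  have hlap : elap u x = ∑ i, g' (EuclideanSpace.single i 1) i := rfl
  have hdX : ediv X x = ∑ i, X' (EuclideanSpace.single i 1) i := rfl
  have hedivY : ediv Y x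
      = (u x)⁻¹ * elap u x - ((u x) ^ 2)⁻¹ * ‖a‖ ^ 2 + (1/2) * ediv X x := by
    rw [hlap, hdX, hnorma, Finset.mul_sum, Finset.mul_sum, Finset.mul_sum,
      ← Finset.sum_sub_distrib, ← Finset.sum_add_distrib]
    show ∑ i, (fderiv ℝ Y x) (EuclideanSpace.single i 1) i = _
    refine Finset.sum_congr rfl fun i _ => ?_
    rw [hfY]
    simp only [ContinuousLinearMap.add_apply, ContinuousLinearMap.smul_apply,
      ContinuousLinearMap.smulRight_apply, hc'def, ContinuousLinearMap.neg_apply,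
      PiLp.add_apply, PiLp.smul_apply, smul_eq_mul, ha_i i]
    ring
  have hYx : ‖Y x‖ ^ 2
      = ((u x) ^ 2)⁻¹ * ‖a‖ ^ 2 + (u x)⁻¹ * ⟪X x, a⟫ + ‖X x‖ ^ 2 / 4 := by
    rw [hYdef x, hgradφ x hx, ← hadef, norm_add_sq_real, real_inner_smul_left,
      real_inner_smul_right, norm_smul, norm_smul, real_inner_comm]
    rw [Real.norm_eq_abs, Real.norm_eq_abs, mul_pow, mul_pow, sq_abs, sq_abs]
    ring
  have key : (u x)⁻¹ * (elap u x + ⟪X x, a⟫) ≤ - q x := by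
    have h2 : elap u x + ⟪X x, a⟫ ≤ -q x * u x := by
      have := hsuper x hx; rw [← hadef] at this; linarith
    calc (u x)⁻¹ * (elap u x + ⟪X x, a⟫) ≤ (u x)⁻¹ * (-q x * u x) :=
          mul_le_mul_of_nonneg_left h2 (inv_nonneg.mpr hux.le)
      _ = -q x := by field_simp
  have kx : (u x)⁻¹ * (elap u x + ⟪X x, a⟫)
      = (u x)⁻¹ * elap u x + (u x)⁻¹ * ⟪X x, a⟫ := mul_add _ _ _
  rw [hQdef x, hedivY, hYx]
  linarith [key, kx]
end

section
/- Combining the two previous results: let Ω ⊆ ℝⁿ be open, X : Ω → ℝⁿ C¹, q : Ω → ℝ continuous, and suppose there exists a C² function u > 0 on Ω with Δu + ⟨X, ∇u⟩ + qu ≤ 0. Then the Schrödinger operator −(Δ + Q) with Q = q − (1/2)div X − |X|²/4 is nonnegative, i.e., ∫_Ω (|∇f|² − Qf²) ≥ 0 for all compactly supported C¹ functions f on Ω. -/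
open MeasureTheory RealInnerProductSpace

/-!
Put `W = ∇ log u + X / 2`. The supersolution inequality gives, on `Ω`,
`div W + |W|² = (Δu + ⟨X, ∇u⟩) / u + div X / 2 + |X|² / 4 ≤ -Q`.
Completing the square,
`|∇f|² - Q f² = |∇f - f W|² + f² (-Q - div W - |W|²) + div (f² W)`,
where the first two terms are nonnegative and the divergence of the compactly supported
`C¹` field `f² W` integrates to zero.
-/

lemma ContDiffOn.contDiff_of_tsupport_subset {𝕜 E F : Type*} [NontriviallyNormedField 𝕜]
    [NormedAddCommGroup E] [NormedSpace 𝕜 E] [NormedAddCommGroup F] [NormedSpace 𝕜 F]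
    {f : E → F} {s : Set E} {k : WithTop ℕ∞} (hf : ContDiffOn 𝕜 k f s) (hs : IsOpen s)
    (hfs : tsupport f ⊆ s) : ContDiff 𝕜 k f := by
  refine contDiff_iff_contDiffAt.2 fun x => ?_
  by_cases hx : x ∈ s
  · exact hf.contDiffAt (hs.mem_nhds hx)
  · exact contDiffAt_const.congr_of_eventuallyEq
      (notMem_tsupport_iff_eventuallyEq.1 fun h => hx (hfs h))

lemma norm_sq_sub_mul_sq_eq {E : Type*} [NormedAddCommGroup E] [InnerProductSpace ℝ E]
    (g w : E) (f Q d : ℝ) :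
    ‖g‖ ^ 2 - Q * f ^ 2 = ‖g - f • w‖ ^ 2 + f ^ 2 * (-Q - d - ‖w‖ ^ 2)
      + (⟪(2 * f) • g, w⟫ + f ^ 2 * d) := by
  rw [norm_sub_sq_real, inner_smul_right, inner_smul_left, norm_smul, mul_pow, Real.norm_eq_abs,
    sq_abs]
  simp only [conj_trivial]
  ring

section Gradient

variable {F : Type*} [NormedAddCommGroup F] [InnerProductSpace ℝ F] [CompleteSpace F]
  {f : F → ℝ} {x : F}

lemma gradient_eq_zero_of_notMem_tsupport (hx : x ∉ tsupport f) : gradient f x = 0 := by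
  simp [gradient, fderiv_of_notMem_tsupport ℝ hx]

lemma gradient_fun_pow_two (hf : DifferentiableAt ℝ f x) :
    gradient (fun y => f y ^ 2) x = (2 * f x) • gradient f x := by
  rw [gradient, (hf.hasFDerivAt.pow 2).fderiv, map_smul]
  norm_num [gradient]

lemma gradient_fun_inv (hf : DifferentiableAt ℝ f x) (hx : f x ≠ 0) :
    gradient (fun y => (f y)⁻¹) x = -(f x ^ 2)⁻¹ • gradient f x := by
  have hinv : HasFDerivAt (fun y => (f y)⁻¹) (-(f x ^ 2)⁻¹ • fderiv ℝ f x) x :=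
    (hasDerivAt_inv hx).comp_hasFDerivAt x hf.hasFDerivAt
  rw [gradient, hinv.fderiv, map_smul]
  rfl

lemma ContDiff.continuous_gradient (hf : ContDiff ℝ 1 f) : Continuous (gradient f) :=
  (InnerProductSpace.toDual ℝ F).symm.continuous.comp (hf.continuous_fderiv one_ne_zero)

lemma ContDiffOn.gradient_of_isOpen {s : Set F} {m k : WithTop ℕ∞} (hf : ContDiffOn ℝ k f s)
    (hs : IsOpen s) (hmk : m + 1 ≤ k) : ContDiffOn ℝ m (gradient f) s :=
  (InnerProductSpace.toDual ℝ F).symm.contDiff.comp_contDiffOn (hf.fderiv_of_isOpen hs hmk)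

end Gradient

section Integration

variable {E : Type*} [NormedAddCommGroup E] [NormedSpace ℝ E] [MeasurableSpace E]
  [OpensMeasurableSpace E] {μ : Measure E} {g : E → ℝ}

lemma ContDiff.integrable_fderiv_apply [IsFiniteMeasureOnCompacts μ] (hg : ContDiff ℝ 1 g)
    (hgc : HasCompactSupport g) (v : E) : Integrable (fun x => fderiv ℝ g x v) μ :=
  ((hg.continuous_fderiv one_ne_zero).clm_apply continuous_const).integrable_of_hasCompactSupport
    (hgc.fderiv_apply ℝ v)

lemma ContDiff.integral_fderiv_apply_eq_zero [FiniteDimensional ℝ E] [BorelSpace E]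
    [μ.IsAddHaarMeasure] (hg : ContDiff ℝ 1 g) (hgc : HasCompactSupport g) (v : E) :
    ∫ x, fderiv ℝ g x v ∂μ = 0 := by
  have := integral_mul_fderiv_eq_neg_fderiv_mul_of_integrable (μ := μ) (f := fun _ => (1 : ℝ))
    (g := g) (v := v) (by simp) (by simpa using hg.integrable_fderiv_apply hgc v)
    (by simpa using hg.continuous.integrable_of_hasCompactSupport hgc)
    (fun x _ => differentiableAt_const _) (fun x _ => hg.differentiable one_ne_zero x)
  simpa using this

end Integration

section Euclidean

variable {n : ℕ}

local notation "𝔼" => EuclideanSpace ℝ (Fin n)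

lemma sum_apply_single_mul (L : 𝔼 →L[ℝ] ℝ) (y : 𝔼) :
    ∑ i, L (EuclideanSpace.single i 1) * y i = L y := by
  conv_rhs => rw [← (EuclideanSpace.basisFun (Fin n) ℝ).sum_repr y]
  simp [mul_comm]

lemma ediv_eq_zero_of_notMem_tsupport {Y : 𝔼 → 𝔼} {x : 𝔼} (hx : x ∉ tsupport Y) :
    ediv Y x = 0 := by
  simp [ediv, fderiv_of_notMem_tsupport ℝ hx]

lemma ediv_add {Y Z : 𝔼 → 𝔼} {x : 𝔼} (hY : DifferentiableAt ℝ Y x)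
    (hZ : DifferentiableAt ℝ Z x) : ediv (fun y => Y y + Z y) x = ediv Y x + ediv Z x := by
  simp [ediv, fderiv_fun_add hY hZ, Finset.sum_add_distrib]

lemma ediv_const_smul {Y : 𝔼 → 𝔼} {x : 𝔼} (c : ℝ) (hY : DifferentiableAt ℝ Y x) :
    ediv (fun y => c • Y y) x = c * ediv Y x := by
  simp [ediv, fderiv_fun_const_smul hY, Finset.mul_sum]

lemma ediv_smul {a : 𝔼 → ℝ} {Y : 𝔼 → 𝔼} {x : 𝔼} (ha : DifferentiableAt ℝ a x)
    (hY : DifferentiableAt ℝ Y x) :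
    ediv (fun y => a y • Y y) x = a x * ediv Y x + ⟪gradient a x, Y x⟫ := by
  simp [ediv, fderiv_fun_smul ha hY, Finset.sum_add_distrib, Finset.mul_sum, sum_apply_single_mul]

lemma ContDiffOn.continuousOn_ediv {Ω : Set 𝔼} {Y : 𝔼 → 𝔼} (hY : ContDiffOn ℝ 1 Y Ω)
    (hΩ : IsOpen Ω) : ContinuousOn (ediv Y) Ω :=
  continuousOn_finsetSum _ fun i _ => (EuclideanSpace.proj i).continuous.comp_continuousOn
    ((hY.continuousOn_fderiv_of_isOpen hΩ le_rfl).clm_apply continuousOn_const)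

lemma integral_ediv_eq_zero {V : 𝔼 → 𝔼} (hV : ContDiff ℝ 1 V) (hVc : HasCompactSupport V) :
    ∫ x, ediv V x = 0 := by
  have hVi : ∀ i, ContDiff ℝ 1 fun y => V y i := fun i =>
    (EuclideanSpace.proj i : 𝔼 →L[ℝ] ℝ).contDiff.comp hV
  have hVic : ∀ i, HasCompactSupport fun y => V y i := fun i =>
    hVc.comp_left (g := fun v : 𝔼 => v i) rfl
  have hcoord : ∀ x i, fderiv ℝ V x (EuclideanSpace.single i 1) i
      = fderiv ℝ (fun y => V y i) x (EuclideanSpace.single i 1) := fun x i => by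
    have h : HasFDerivAt (fun y => V y i) ((EuclideanSpace.proj i).comp (fderiv ℝ V x)) x :=
      (EuclideanSpace.proj i : 𝔼 →L[ℝ] ℝ).hasFDerivAt.comp x
        (hV.differentiable one_ne_zero x).hasFDerivAt
    rw [h.fderiv]
    rfl
  simp_rw [ediv, hcoord]
  rw [integral_finsetSum _ fun i _ => (hVi i).integrable_fderiv_apply (hVic i) _]
  exact Finset.sum_eq_zero fun i _ => (hVi i).integral_fderiv_apply_eq_zero (hVic i) _

lemma integral_inner_gradient_add_mul_ediv_eq_zero {Ω : Set 𝔼} (hΩ : IsOpen Ω) {Z : 𝔼 → 𝔼}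
    (hZ : ContDiffOn ℝ 1 Z Ω) {φ : 𝔼 → ℝ} (hφ : ContDiff ℝ 1 φ) (hφc : HasCompactSupport φ)
    (hφΩ : tsupport φ ⊆ Ω) :
    ∫ x, (⟪gradient φ x, Z x⟫ + φ x * ediv Z x) = 0 := by
  have hV : ContDiff ℝ 1 fun x => φ x • Z x :=
    (hφ.contDiffOn.smul hZ).contDiff_of_tsupport_subset hΩ
      ((tsupport_smul_subset_left _ _).trans hφΩ)
  rw [← integral_ediv_eq_zero hV hφc.smul_right]
  congr 1
  ext x
  by_cases hx : x ∈ tsupport φ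
  · have hZx : DifferentiableAt ℝ Z x :=
      (hZ.differentiableOn one_ne_zero).differentiableAt (hΩ.mem_nhds (hφΩ hx))
    rw [ediv_smul (hφ.differentiable one_ne_zero x) hZx, add_comm]
  · rw [gradient_eq_zero_of_notMem_tsupport hx, image_eq_zero_of_notMem_tsupport hx,
      ediv_eq_zero_of_notMem_tsupport fun h => hx (tsupport_smul_subset_left _ _ h)]
    simp

lemma integrable_inner_gradient_add_mul_ediv {Ω : Set 𝔼} (hΩ : IsOpen Ω) {Z : 𝔼 → 𝔼}
    (hZ : ContDiffOn ℝ 1 Z Ω) {φ : 𝔼 → ℝ} (hφ : ContDiff ℝ 1 φ) (hφc : HasCompactSupport φ)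
    (hφΩ : tsupport φ ⊆ Ω) :
    Integrable fun x => ⟪gradient φ x, Z x⟫ + φ x * ediv Z x := by
  refine (ContinuousOn.integrableOn_compact hφc ?_).integrable_of_forall_notMem_eq_zero ?_
  · exact ((hφ.continuous_gradient.continuousOn.inner hZ.continuousOn).add
      (hφ.continuous.continuousOn.mul (hZ.continuousOn_ediv hΩ))).mono hφΩ
  · intro x hx
    simp [gradient_eq_zero_of_notMem_tsupport hx, image_eq_zero_of_notMem_tsupport hx]

lemma integrable_norm_gradient_sq_sub_mul_sq {Ω : Set 𝔼} {V φ : 𝔼 → ℝ} (hV : ContinuousOn V Ω)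
    (hφ : ContDiff ℝ 1 φ) (hφc : HasCompactSupport φ) (hφΩ : tsupport φ ⊆ Ω) :
    Integrable fun x => ‖gradient φ x‖ ^ 2 - V x * φ x ^ 2 := by
  refine (ContinuousOn.integrableOn_compact hφc ?_).integrable_of_forall_notMem_eq_zero ?_
  · exact ((hφ.continuous_gradient.norm.pow 2).continuousOn.sub
      (hV.mul (hφ.continuous.pow 2).continuousOn)).mono hφΩ
  · intro x hx
    simp [gradient_eq_zero_of_notMem_tsupport hx, image_eq_zero_of_notMem_tsupport hx]

lemma inner_gradient_sq_add_mul_ediv_le {f V : 𝔼 → ℝ} {W : 𝔼 → 𝔼} {x : 𝔼}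
    (hf : DifferentiableAt ℝ f x) (hW : f x ≠ 0 → ediv W x + ‖W x‖ ^ 2 ≤ -V x) :
    ⟪gradient (fun y => f y ^ 2) x, W x⟫ + f x ^ 2 * ediv W x
      ≤ ‖gradient f x‖ ^ 2 - V x * f x ^ 2 := by
  rw [norm_sq_sub_mul_sq_eq (gradient f x) (W x) (f x) (V x) (ediv W x), gradient_fun_pow_two hf]
  have : 0 ≤ f x ^ 2 * (-V x - ediv W x - ‖W x‖ ^ 2) := by
    by_cases hfx : f x = 0
    · simp [hfx]
    · exact mul_nonneg (sq_nonneg _) (by linarith [hW hfx])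
  linarith [sq_nonneg ‖gradient f x - f x • W x‖]

/-- The vector field `∇ log u + X / 2`. -/
noncomputable def gradLogAddHalf (u : 𝔼 → ℝ) (X : 𝔼 → 𝔼) (x : 𝔼) : 𝔼 :=
  (u x)⁻¹ • gradient u x + (2⁻¹ : ℝ) • X x

lemma contDiffOn_gradLogAddHalf {Ω : Set 𝔼} (hΩ : IsOpen Ω) {u : 𝔼 → ℝ} {X : 𝔼 → 𝔼}
    (hu : ContDiffOn ℝ 2 u Ω) (hX : ContDiffOn ℝ 1 X Ω) (hu0 : ∀ x ∈ Ω, u x ≠ 0) :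
    ContDiffOn ℝ 1 (gradLogAddHalf u X) Ω :=
  (((hu.of_le one_le_two).inv hu0).smul (hu.gradient_of_isOpen hΩ (by norm_num))).add
    (hX.const_smul _)

lemma ediv_gradLogAddHalf_add_norm_sq {u : 𝔼 → ℝ} {X : 𝔼 → 𝔼} {x : 𝔼}
    (hu : DifferentiableAt ℝ u x) (hgu : DifferentiableAt ℝ (gradient u) x)
    (hX : DifferentiableAt ℝ X x) (hux : u x ≠ 0) :
    ediv (gradLogAddHalf u X) x + ‖gradLogAddHalf u X x‖ ^ 2
      = (elap u x + ⟪X x, gradient u x⟫) / u x + ediv X x / 2 + ‖X x‖ ^ 2 / 4 := by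
  have hdiv : ediv (gradLogAddHalf u X) x
      = elap u x / u x - ‖gradient u x‖ ^ 2 / u x ^ 2 + ediv X x / 2 := by
    have hinv : DifferentiableAt ℝ (fun y => (u y)⁻¹) x := hu.inv hux
    unfold gradLogAddHalf
    rw [ediv_add (Y := fun y => (u y)⁻¹ • gradient u y) (Z := fun y => (2⁻¹ : ℝ) • X y)
        (hinv.smul hgu) (hX.const_smul (2⁻¹ : ℝ)), ediv_smul hinv hgu, ediv_const_smul _ hX,
      gradient_fun_inv hu hux, inner_smul_left, real_inner_self_eq_norm_sq, elap]
    simp only [conj_trivial]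
    ring
  have hnorm : ‖gradLogAddHalf u X x‖ ^ 2
      = ‖gradient u x‖ ^ 2 / u x ^ 2 + ⟪X x, gradient u x⟫ / u x + ‖X x‖ ^ 2 / 4 := by
    rw [gradLogAddHalf, norm_add_sq_real, inner_smul_left, inner_smul_right, norm_smul, norm_smul,
      mul_pow, mul_pow, Real.norm_eq_abs, Real.norm_eq_abs, sq_abs, sq_abs, real_inner_comm]
    simp only [conj_trivial]
    ring
  rw [hdiv, hnorm]
  field_simp
  ring

lemma ediv_gradLogAddHalf_add_norm_sq_le {Ω : Set 𝔼} (hΩ : IsOpen Ω) {u q : 𝔼 → ℝ}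
    {X : 𝔼 → 𝔼} (hu : ContDiffOn ℝ 2 u Ω) (hX : ContDiffOn ℝ 1 X Ω) {x : 𝔼} (hx : x ∈ Ω)
    (hux : 0 < u x) (hsuper : elap u x + ⟪X x, gradient u x⟫ + q x * u x ≤ 0) :
    ediv (gradLogAddHalf u X) x + ‖gradLogAddHalf u X x‖ ^ 2
      ≤ -(q x - 1 / 2 * ediv X x - ‖X x‖ ^ 2 / 4) := by
  have hx' := hΩ.mem_nhds hx
  have hgu : ContDiffOn ℝ 1 (gradient u) Ω := hu.gradient_of_isOpen hΩ (by norm_num)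
  rw [ediv_gradLogAddHalf_add_norm_sq ((hu.differentiableOn two_ne_zero).differentiableAt hx')
    ((hgu.differentiableOn one_ne_zero).differentiableAt hx')
    ((hX.differentiableOn one_ne_zero).differentiableAt hx') hux.ne']
  have h : (elap u x + ⟪X x, gradient u x⟫) / u x ≤ -q x := (div_le_iff₀ hux).2 (by linarith)
  linarith

end Euclidean

theorem stmt_10 {n : ℕ} (Ω : Set (EuclideanSpace ℝ (Fin n))) (hΩ : IsOpen Ω)
    (X : EuclideanSpace ℝ (Fin n) → EuclideanSpace ℝ (Fin n))
    (hX : ContDiffOn ℝ 1 X Ω) (q : EuclideanSpace ℝ (Fin n) → ℝ)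
    (hq : ContinuousOn q Ω)
    (u : EuclideanSpace ℝ (Fin n) → ℝ) (hu : ContDiffOn ℝ 2 u Ω)
    (hupos : ∀ x ∈ Ω, 0 < u x)
    (hsuper : ∀ x ∈ Ω, elap u x + ⟪X x, gradient u x⟫ + q x * u x ≤ 0)
    (Q : EuclideanSpace ℝ (Fin n) → ℝ)
    (hQdef : ∀ x, Q x = q x - (1 / 2) * ediv X x - ‖X x‖ ^ 2 / 4) :
    ∀ f : EuclideanSpace ℝ (Fin n) → ℝ, ContDiff ℝ 1 f →
      HasCompactSupport f → tsupport f ⊆ Ω →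
      0 ≤ ∫ x in Ω, (‖gradient f x‖ ^ 2 - Q x * (f x) ^ 2) := by
  intro f hf hfc hfΩ
  have hW := contDiffOn_gradLogAddHalf hΩ hu hX fun x hx => (hupos x hx).ne'
  have hQ : ContinuousOn Q Ω := by
    rw [show Q = _ from funext hQdef]
    exact (hq.sub (continuousOn_const.mul (hX.continuousOn_ediv hΩ))).sub
      ((hX.continuousOn.norm.pow 2).div_const _)
  have hf2 : ContDiff ℝ 1 fun x => f x ^ 2 := hf.pow 2
  have hf2c : HasCompactSupport fun x => f x ^ 2 :=
    hfc.comp_left (g := (· ^ 2)) (zero_pow two_ne_zero)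
  have hf2Ω : tsupport (fun x => f x ^ 2) ⊆ Ω :=
    (tsupport_comp_subset (g := (· ^ 2)) (zero_pow two_ne_zero) f).trans hfΩ
  have hle : ∀ x, ⟪gradient (fun y => f y ^ 2) x, gradLogAddHalf u X x⟫
      + f x ^ 2 * ediv (gradLogAddHalf u X) x ≤ ‖gradient f x‖ ^ 2 - Q x * f x ^ 2 := by
    refine fun x =>
      inner_gradient_sq_add_mul_ediv_le (hf.differentiable one_ne_zero x) fun hfx => ?_
    have hx := hfΩ (subset_tsupport f hfx)
    rw [hQdef]
    exact ediv_gradLogAddHalf_add_norm_sq_le hΩ hu hX hx (hupos x hx) (hsuper x hx)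
  calc 0 = ∫ x, (⟪gradient (fun y => f y ^ 2) x, gradLogAddHalf u X x⟫
          + f x ^ 2 * ediv (gradLogAddHalf u X) x) :=
        (integral_inner_gradient_add_mul_ediv_eq_zero hΩ hW hf2 hf2c hf2Ω).symm
    _ ≤ ∫ x, (‖gradient f x‖ ^ 2 - Q x * f x ^ 2) :=
        integral_mono (integrable_inner_gradient_add_mul_ediv hΩ hW hf2 hf2c hf2Ω)
          (integrable_norm_gradient_sq_sub_mul_sq hQ hf hfc hfΩ) hle
    _ = ∫ x in Ω, (‖gradient f x‖ ^ 2 - Q x * f x ^ 2) := by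
        refine (setIntegral_eq_integral_of_forall_compl_eq_zero fun x hx => ?_).symm
        have hx' : x ∉ tsupport f := fun h => hx (hfΩ h)
        simp [gradient_eq_zero_of_notMem_tsupport hx', image_eq_zero_of_notMem_tsupport hx']
end
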